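/- (Theorem 1(b)) Let n ≥ 3 and let r_1, …, r_n > 0. If α_1, …, α_n is a connecting cycle with distinct consecutive vertices (l_j ≠ 0 for all j) at which all n partial derivatives ∂L/∂α_j vanish, then there exists σ ≥ 0 such that for every j the distance from the origin O to the line through p_j and p_{j+1} equals σ; i.e., every side (or its straight-line continuation) is tangent to one common circle of radius σ centered at O. -/

import Mathlib

/-!
Moving `p_j` along its circle changes only the two sides at `p_j`, and the derivative of
`|q - p_j|` in `α_j` is the signed distance `cross q p_j / |q - p_j|` from `O` to the line
through `q` and `p_j`. Hence `∂L/∂α_j = h_{j-1} - h_j`, where `h_k` is the signed distance from `O`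
to the `k`-th side line; at a critical cycle all `h_k` agree, and `σ = |h_0|`.
-/

open Real

/-- The point with polar radius `ρ` and polar angle `θ` in the Euclidean plane. -/
noncomputable def pt (ρ θ : ℝ) : EuclideanSpace ℝ (Fin 2) :=
  WithLp.toLp 2 ![ρ * Real.cos θ, ρ * Real.sin θ]

/-- The `i`-th vertex `p_i = (r_i cos α_i, r_i sin α_i)` of the connecting cycle. -/
noncomputable def vert {n : ℕ} [NeZero n] (r α : Fin n → ℝ) (i : Fin n) :
    EuclideanSpace ℝ (Fin 2) :=
  pt (r i) (α i)

/-- The perimeter `L = Σ_j |p_j − p_{j+1}|` of the connecting cycle (indices mod `n`). -/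
noncomputable def perimE {n : ℕ} [NeZero n] (r α : Fin n → ℝ) : ℝ :=
  ∑ j, dist (vert r α j) (vert r α (j + 1))

local notation "E²" => EuclideanSpace ℝ (Fin 2)

def cross (x y : E²) : ℝ := x 0 * y 1 - x 1 * y 0

noncomputable def signedHeight (p q : E²) : ℝ := cross p q / dist p q

lemma cross_swap (x y : E²) : cross y x = -cross x y := by
  unfold cross; ring

lemma cross_sq_add_inner_sq (x y : E²) :
    cross x y ^ 2 + inner ℝ x y ^ 2 = ‖x‖ ^ 2 * ‖y‖ ^ 2 := by
  simp only [EuclideanSpace.norm_sq_eq, PiLp.inner_apply, Fin.sum_univ_two, Real.norm_eq_abs,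
    sq_abs, RCLike.inner_apply, conj_trivial, cross]
  ring

lemma abs_cross_le (x y : E²) : |cross x y| ≤ ‖x‖ * ‖y‖ := by
  refine abs_le_of_sq_le_sq (b := ‖x‖ * ‖y‖) ?_ (by positivity)
  nlinarith [cross_sq_add_inner_sq x y, sq_nonneg (inner ℝ x y)]

lemma cross_lineMap_sub (p q : E²) (t : ℝ) :
    cross (AffineMap.lineMap p q t) (q - p) = cross p q := by
  simp only [cross, AffineMap.lineMap_apply_module', PiLp.add_apply, PiLp.smul_apply,
    PiLp.sub_apply, smul_eq_mul]
  ring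

lemma dist_eq_sqrt (x y : E²) : dist x y = √((x 0 - y 0) ^ 2 + (x 1 - y 1) ^ 2) := by
  simp [EuclideanSpace.dist_eq, Fin.sum_univ_two, Real.dist_eq, sq_abs]

lemma infDist_zero_affineSpan_pair {p q : E²} (h : p ≠ q) :
    Metric.infDist 0 (line[ℝ, p, q] : Set E²) = |signedHeight p q| := by
  have hd : 0 < ‖q - p‖ := by rw [← dist_eq_norm, dist_comm]; exact dist_pos.2 h
  rw [signedHeight, abs_div, abs_of_nonneg dist_nonneg, dist_comm, dist_eq_norm]
  apply le_antisymm
  · -- the foot of the perpendicular from the origin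
    set y := AffineMap.lineMap p q (-inner ℝ p (q - p) / ‖q - p‖ ^ 2)
    have hy : inner ℝ y (q - p) = 0 := by
      simp only [y, AffineMap.lineMap_apply_module', inner_add_left, inner_smul_left,
        real_inner_self_eq_norm_sq, conj_trivial]
      field_simp
      ring
    have hyv : ‖y‖ * ‖q - p‖ = |cross p q| := by
      rw [← cross_lineMap_sub p q, ← sq_eq_sq₀ (by positivity) (abs_nonneg _), sq_abs, mul_pow,
        ← cross_sq_add_inner_sq, hy]
      ring
    calc Metric.infDist 0 (line[ℝ, p, q] : Set E²) ≤ dist 0 y :=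
          Metric.infDist_le_dist_of_mem (AffineMap.lineMap_mem_affineSpan_pair _ _ _)
      _ = |cross p q| / ‖q - p‖ := by
        rw [dist_comm, dist_zero_right, ← hyv, mul_div_cancel_right₀ _ hd.ne']
  · refine (Metric.le_infDist ⟨p, left_mem_affineSpan_pair ℝ p q⟩).2 fun y hy ↦ ?_
    obtain ⟨t, rfl⟩ := mem_affineSpan_pair_iff_exists_lineMap_eq.1 hy
    rw [dist_comm, dist_zero_right, div_le_iff₀ hd, ← cross_lineMap_sub p q t]
    exact abs_cross_le _ _

lemma pt_zero (ρ θ : ℝ) : pt ρ θ 0 = ρ * cos θ := rfl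

lemma pt_one (ρ θ : ℝ) : pt ρ θ 1 = ρ * sin θ := rfl

lemma hasDerivAt_dist_pt (q : E²) (ρ θ : ℝ) (h : q ≠ pt ρ θ) :
    HasDerivAt (fun t ↦ dist q (pt ρ t)) (signedHeight q (pt ρ θ)) θ := by
  have hg : HasDerivAt (fun t ↦ (q 0 - ρ * cos t) ^ 2 + (q 1 - ρ * sin t) ^ 2)
      (2 * cross q (pt ρ θ)) θ := by
    refine ((((hasDerivAt_cos θ).const_mul ρ).const_sub (q 0)).fun_pow 2).fun_add
      ((((hasDerivAt_sin θ).const_mul ρ).const_sub (q 1)).fun_pow 2) |>.congr_deriv ?_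
    rw [cross, pt_zero, pt_one]
    ring
  have hpos : 0 < (q 0 - ρ * cos θ) ^ 2 + (q 1 - ρ * sin θ) ^ 2 := by
    simpa only [dist_eq_sqrt, pt_zero, pt_one, sqrt_pos] using dist_pos.2 h
  convert hg.sqrt hpos.ne' using 1
  · funext t
    rw [dist_eq_sqrt, pt_zero, pt_one]
  · rw [signedHeight, dist_eq_sqrt, pt_zero, pt_one]
    field_simp

section Polygon

variable {n : ℕ} [NeZero n] (r α : Fin n → ℝ)

lemma vert_update (j : Fin n) (t : ℝ) :
    vert r (Function.update α j t) = Function.update (vert r α) j (pt (r j) t) := by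
  funext k
  rcases eq_or_ne k j with rfl | hk
  · simp [vert]
  · simp [vert, hk]

lemma hasDerivAt_perimE_update (hne : ∀ j, vert r α j ≠ vert r α (j + 1)) (j : Fin n) :
    HasDerivAt (fun t ↦ perimE r (Function.update α j t))
      (signedHeight (vert r α (j - 1)) (vert r α j) - signedHeight (vert r α j) (vert r α (j + 1)))
      (α j) := by
  have hj : j + 1 ≠ j := fun h ↦ hne j (by rw [h])
  have hside : ∀ k, HasDerivAt (fun t ↦ dist (vert r (Function.update α j t) k)
      (vert r (Function.update α j t) (k + 1)))
      ((if k + 1 = j then signedHeight (vert r α k) (vert r α (k + 1)) else 0) -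
        if k = j then signedHeight (vert r α k) (vert r α (k + 1)) else 0) (α j) := by
    intro k
    simp only [vert_update]
    rcases eq_or_ne k j with rfl | hk
    · simp only [Function.update_self, Function.update_of_ne hj, hj, if_false, if_true, zero_sub]
      simp_rw [dist_comm _ (vert r α (k + 1))]
      convert hasDerivAt_dist_pt _ _ _ (hne k).symm using 1
      rw [signedHeight, signedHeight, cross_swap, dist_comm, neg_div, neg_neg]
      rfl
    rcases eq_or_ne (k + 1) j with rfl | hk1
    · simp only [Function.update_self, Function.update_of_ne hk, if_true, hk, if_false, sub_zero]
      exact hasDerivAt_dist_pt _ _ _ (hne k)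
    · simp only [Function.update_of_ne hk, Function.update_of_ne hk1, hk, hk1, if_false, sub_self]
      exact hasDerivAt_const _ _
  refine (HasDerivAt.fun_sum fun k (_ : k ∈ Finset.univ) ↦ hside k).congr_deriv ?_
  simp_rw [Finset.sum_sub_distrib, ← eq_sub_iff_add_eq, Finset.sum_ite_eq', Finset.mem_univ,
    if_true, sub_add_cancel]

end Polygon

lemma Fin.apply_eq_apply_zero_of_forall_add_one {n : ℕ} [NeZero n] {β : Type*} {f : Fin n → β}
    (hf : ∀ j, f (j + 1) = f j) (j : Fin n) : f j = f 0 := by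
  obtain ⟨m, rfl⟩ := Nat.exists_eq_succ_of_ne_zero (NeZero.ne n)
  induction j using Fin.induction with
  | zero => rfl
  | succ i ih => rw [← Fin.coeSucc_eq_succ, hf, ih]

theorem stmt_3_general {n : ℕ} [NeZero n] (r : Fin n → ℝ)
    (α : Fin n → ℝ) (hne : ∀ j, vert r α j ≠ vert r α (j + 1))
    (hcrit : ∀ j, HasDerivAt (fun t => perimE r (Function.update α j t)) 0 (α j)) :
    ∃ σ : ℝ, 0 ≤ σ ∧ ∀ j, Metric.infDist (0 : EuclideanSpace ℝ (Fin 2))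
      (affineSpan ℝ {vert r α j, vert r α (j + 1)} :
        Set (EuclideanSpace ℝ (Fin 2))) = σ := by
  set h : Fin n → ℝ := fun j ↦ signedHeight (vert r α j) (vert r α (j + 1))
  have hstep : ∀ j, h (j + 1) = h j := fun j ↦ by
    have := (hasDerivAt_perimE_update r α hne (j + 1)).unique (hcrit (j + 1))
    rw [add_sub_cancel_right, sub_eq_zero] at this
    exact this.symm
  refine ⟨|h 0|, abs_nonneg _, fun j ↦ ?_⟩
  rw [infDist_zero_affineSpan_pair (hne j), ← Fin.apply_eq_apply_zero_of_forall_add_one hstep j]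

/-- Theorem 1(b): at a stationary connecting cycle with distinct consecutive
vertices, there is a common circle of some radius `σ ≥ 0` centered at the origin to which
every side line (the line through `p_j` and `p_{j+1}`) is tangent, i.e. all side lines are
at the same distance `σ` from the origin. -/
theorem stmt_3 {n : ℕ} [NeZero n] (hn : 3 ≤ n) (r : Fin n → ℝ) (hr : ∀ i, 0 < r i)
    (α : Fin n → ℝ) (hne : ∀ j, vert r α j ≠ vert r α (j + 1))
    (hcrit : ∀ j, HasDerivAt (fun t => perimE r (Function.update α j t)) 0 (α j)) :
    ∃ σ : ℝ, 0 ≤ σ ∧ ∀ j, Metric.infDist (0 : EuclideanSpace ℝ (Fin 2))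
      (affineSpan ℝ {vert r α j, vert r α (j + 1)} :
        Set (EuclideanSpace ℝ (Fin 2))) = σ :=
  stmt_3_general r α hne hcrit
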